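/- arXiv:2106.02152 — 2 statements merged into one kernel-verified Lean document; each statement's English description precedes it below -/
import Mathlib

section
/- Let h, f > 0 be real numbers with h > f. The function g(z) = (2h|z|² + f z + f z̄)/(1 − |z|²), defined for complex z with |z| ≠ 1, attains its minimum over the open unit disk at z⁺ = (−h + √(h² − f²))/f, with minimum value −h + √(h² − f²); moreover |z⁺| < 1. -/
/-!
Let `s² = h² - f²`. Clearing the denominator,
`g z - (-h + s) = ((h + s)|z|² + 2f Re z + (h - s)) / (1 - |z|²)`, and since `|z|² ≥ (Re z)²`
the numerator is at least the quadratic `(h + s)x² + 2fx + (h - s)` in `x = Re z`. Its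
discriminant vanishes because `(h + s)(h - s) = f²`, so it equals `((h + s)x + f)² / (h + s) ≥ 0`,
with its double root at `x = -f / (h + s) = (-h + s) / f`.
-/

noncomputable def diskRatio (h f : ℝ) (z : ℂ) : ℝ :=
  (2 * h * ‖z‖ ^ 2 + 2 * f * z.re) / (1 - ‖z‖ ^ 2)

namespace diskRatio

variable {h f s : ℝ}

theorem sub_neg_add_eq {z : ℂ} (hz : ‖z‖ < 1) (s : ℝ) :
    diskRatio h f z - (-h + s) =
      ((h + s) * ‖z‖ ^ 2 + 2 * f * z.re + (h - s)) / (1 - ‖z‖ ^ 2) := by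
  have hd : 1 - ‖z‖ ^ 2 ≠ 0 := by nlinarith [norm_nonneg z]
  rw [diskRatio]
  field_simp
  ring

theorem quadratic_nonneg (hs : s ^ 2 = h ^ 2 - f ^ 2) (hfs : |f| < h + s) (x : ℝ) :
    0 ≤ (h + s) * x ^ 2 + 2 * f * x + (h - s) := by
  have hsq : (h + s) * ((h + s) * x ^ 2 + 2 * f * x + (h - s)) = ((h + s) * x + f) ^ 2 := by
    linear_combination (-1 : ℝ) * hs
  exact nonneg_of_mul_nonneg_right (hsq ▸ sq_nonneg _) ((abs_nonneg f).trans_lt hfs)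

theorem neg_add_le (hs : s ^ 2 = h ^ 2 - f ^ 2) (hfs : |f| < h + s) {z : ℂ} (hz : ‖z‖ < 1) :
    -h + s ≤ diskRatio h f z := by
  rw [← sub_nonneg, sub_neg_add_eq hz]
  have hre : z.re ^ 2 ≤ ‖z‖ ^ 2 := by
    simpa only [sq_abs] using pow_le_pow_left₀ (abs_nonneg _) (Complex.abs_re_le_norm z) 2
  have hpos : 0 < h + s := (abs_nonneg f).trans_lt hfs
  refine div_nonneg ?_ (by nlinarith [norm_nonneg z])
  nlinarith [quadratic_nonneg hs hfs z.re, mul_le_mul_of_nonneg_left hre hpos.le]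

theorem abs_neg_div_lt_one (hfs : |f| < h + s) : |-f / (h + s)| < 1 := by
  have hpos : 0 < h + s := (abs_nonneg f).trans_lt hfs
  rwa [abs_div, abs_neg, abs_of_pos hpos, div_lt_one hpos]

theorem ofReal_neg_div (hs : s ^ 2 = h ^ 2 - f ^ 2) (hfs : |f| < h + s) :
    diskRatio h f ((-f / (h + s) : ℝ) : ℂ) = -h + s := by
  have hlt : ‖((-f / (h + s) : ℝ) : ℂ)‖ < 1 := by
    rw [Complex.norm_real, Real.norm_eq_abs]
    exact abs_neg_div_lt_one hfs
  have hpos : 0 < h + s := (abs_nonneg f).trans_lt hfs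
  rw [← sub_eq_zero, sub_neg_add_eq hlt, Complex.norm_real, Real.norm_eq_abs, sq_abs,
    Complex.ofReal_re]
  apply div_eq_zero_iff.mpr (Or.inl _)
  field_simp
  linear_combination (-1 : ℝ) * hs

end diskRatio

theorem neg_add_div_eq_neg_div_add {h f s : ℝ} (hs : s ^ 2 = h ^ 2 - f ^ 2) (hf : f ≠ 0)
    (hhs : h + s ≠ 0) : (-h + s) / f = -f / (h + s) := by
  rw [div_eq_div_iff hf hhs]
  linear_combination hs

/-- for reals `0 < f < h`, the function
`g(z) = (2h|z|² + f z + f z̄)/(1 − |z|²)` attains its minimum on the open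
unit disk at `z⁺ = (−h + √(h² − f²))/f`, with minimum value `−h + √(h² − f²)`,
and `|z⁺| < 1`. -/
theorem stmt3 (h f : ℝ) (hf : 0 < f) (hhf : f < h) :
    let g : ℂ → ℝ := fun z => (2 * h * ‖z‖ ^ 2 + 2 * f * z.re) / (1 - ‖z‖ ^ 2)
    let zp : ℝ := (-h + Real.sqrt (h ^ 2 - f ^ 2)) / f
    |zp| < 1 ∧ g (zp : ℂ) = -h + Real.sqrt (h ^ 2 - f ^ 2) ∧
      ∀ z : ℂ, ‖z‖ < 1 → g (zp : ℂ) ≤ g z := by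
  intro g zp
  set s := Real.sqrt (h ^ 2 - f ^ 2)
  have hs : s ^ 2 = h ^ 2 - f ^ 2 := Real.sq_sqrt (by nlinarith)
  have hfs : |f| < h + s := by
    rw [abs_of_pos hf]
    linarith [Real.sqrt_nonneg (h ^ 2 - f ^ 2)]
  have hzp : zp = -f / (h + s) :=
    neg_add_div_eq_neg_div_add hs hf.ne' ((abs_nonneg f).trans_lt hfs).ne'
  have hmin : g (zp : ℂ) = -h + s := by
    rw [hzp]
    exact diskRatio.ofReal_neg_div hs hfs
  refine ⟨hzp ▸ diskRatio.abs_neg_div_lt_one hfs, hmin, fun z hz => ?_⟩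
  rw [hmin]
  exact diskRatio.neg_add_le hs hfs hz
end

section
/- Let h and k be bounded operators on a Hilbert space H with conjugation C, with k C-symmetric (kᵀ = k), and suppose k satisfies the Riccati equation h∘k + k∘hᵀ + f + k∘f̄∘k = 0 for a bounded C-symmetric operator f. Then (h + k∘f̄)∘(I − k∘k̄) = (I − k∘k̄)∘(h + f∘k̄), where hᵀ = C h* C, k̄ = C k C, f̄ = C f C. -/
/-!
Conjugating the Riccati equation for `(h, k, f)` by `C` gives the Riccati equation for
`(hᵀ, k̄, f̄)`, because a self-adjoint `h` has `h̄ = hᵀ` and `(hᵀ)‾ = h`. The difference of the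
two sides of the claimed identity is `-(Ric · k̄) + k · Ric̄`, a noncommutative ring identity,
so it vanishes.
-/

open ContinuousLinearMap

theorem riccati_intertwining {R : Type*} [Ring R] {h k f hT kbar fbar : R}
    (hRic : h * k + k * hT + f + k * fbar * k = 0)
    (hRic_conj : hT * kbar + kbar * h + fbar + kbar * f * kbar = 0) :
    (h + k * fbar) * (1 - k * kbar) = (1 - k * kbar) * (h + f * kbar) := by
  rw [← sub_eq_zero]
  calc (h + k * fbar) * (1 - k * kbar) - (1 - k * kbar) * (h + f * kbar)
      = -((h * k + k * hT + f + k * fbar * k) * kbar)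
          + k * (hT * kbar + kbar * h + fbar + kbar * f * kbar) := by noncomm_ring
    _ = 0 := by rw [hRic, hRic_conj, zero_mul, mul_zero, neg_zero, add_zero]

theorem riccati_conj {R M : Type*} [Semiring R] [TopologicalSpace M] [AddCommGroup M]
    [Module R M] [ContinuousAdd M] {C : M → M}
    (hC_add : ∀ x y, C (x + y) = C x + C y) (hC_inv : Function.Involutive C)
    {h k f hT kbar fbar : M →L[R] M}
    (hhT : ∀ x, hT x = C (h (C x))) (hkbar : ∀ x, kbar x = C (k (C x)))
    (hfbar : ∀ x, fbar x = C (f (C x)))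
    (hRic : h ∘L k + k ∘L hT + f + k ∘L fbar ∘L k = 0) :
    hT ∘L kbar + kbar ∘L h + fbar + kbar ∘L f ∘L kbar = 0 := by
  have hC_zero : C 0 = 0 := by simpa using hC_add 0 0
  ext x
  have hRic_x := congrArg C (DFunLike.congr_fun hRic (C x))
  simp only [add_apply, comp_apply, zero_apply, hC_add, hC_zero] at hRic_x
  simpa [hhT, hkbar, hfbar, hC_inv _] using hRic_x

theorem stmt13_general
    {H : Type*} [NormedAddCommGroup H] [InnerProductSpace ℂ H] [CompleteSpace H]
    (C : H → H)
    (hC_add : ∀ x y, C (x + y) = C x + C y)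
    (hC_inv : Function.Involutive C)
    (h₀ k f hT kbar fbar : H →L[ℂ] H)
    -- definitions of conjugates/transposes via C
    (hhT : ∀ x, hT x = C (ContinuousLinearMap.adjoint h₀ (C x)))
    (hkbar : ∀ x, kbar x = C (k (C x)))
    (hfbar : ∀ x, fbar x = C (f (C x)))
    -- structural hypotheses
    (hsa : IsSelfAdjoint h₀)
    -- operator Riccati equation
    (hRic : h₀ ∘L k + k ∘L hT + f + k ∘L fbar ∘L k = 0) :
    (h₀ + k ∘L fbar) ∘L (1 - k ∘L kbar) = (1 - k ∘L kbar) ∘L (h₀ + f ∘L kbar) := by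
  have hhT_conj : ∀ x, hT x = C (h₀ (C x)) := fun x => by rw [hhT, hsa.adjoint_eq]
  exact riccati_intertwining hRic (riccati_conj hC_add hC_inv hhT_conj hkbar hfbar hRic)

/-- if `k` is C-symmetric and solves the operator Riccati
equation `h∘k + k∘hᵀ + f + k∘f̄∘k = 0` with `f` C-symmetric, `h` self-adjoint
and real (`h̄ = hᵀ`), then `(h + k∘f̄)∘(I − k∘k̄) = (I − k∘k̄)∘(h + f∘k̄)`. -/
theorem stmt13
    {H : Type*} [NormedAddCommGroup H] [InnerProductSpace ℂ H] [CompleteSpace H]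
    (C : H → H)
    (hC_add : ∀ x y, C (x + y) = C x + C y)
    (hC_smul : ∀ (a : ℂ) (x : H), C (a • x) = (starRingEnd ℂ a) • C x)
    (hC_inv : Function.Involutive C)
    (hC_inner : ∀ x y : H, (inner ℂ (C x) (C y) : ℂ) = inner ℂ y x)
    (h₀ k f hT kbar fbar hbar : H →L[ℂ] H)
    -- definitions of conjugates/transposes via C
    (hhT : ∀ x, hT x = C (ContinuousLinearMap.adjoint h₀ (C x)))
    (hkbar : ∀ x, kbar x = C (k (C x)))
    (hfbar : ∀ x, fbar x = C (f (C x)))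
    (hhbar : ∀ x, hbar x = C (h₀ (C x)))
    -- structural hypotheses
    (hsa : IsSelfAdjoint h₀)
    (hreal : hbar = hT)
    (hkT : ∀ x, C (ContinuousLinearMap.adjoint k (C x)) = k x)
    (hfT : ∀ x, C (ContinuousLinearMap.adjoint f (C x)) = f x)
    -- operator Riccati equation
    (hRic : h₀ ∘L k + k ∘L hT + f + k ∘L fbar ∘L k = 0) :
    (h₀ + k ∘L fbar) ∘L (1 - k ∘L kbar) = (1 - k ∘L kbar) ∘L (h₀ + f ∘L kbar) :=
  stmt13_general C hC_add hC_inv h₀ k f hT kbar fbar hhT hkbar hfbar hsa hRic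
end
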